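/- arXiv:2206.00833 — 2 statements merged into one kernel-verified Lean document; each statement's English description precedes it below -/
import Mathlib

section
/- For two softmax distributions π(a) ∝ exp(f(a)) and π̃(a) ∝ exp(g(a)) over a finite set 𝒜, the log-ratio satisfies |log(π̃(a)/π(a))| ≤ |f(a)-g(a)| + Σ_{a'} (π(a') + π̃(a')) |f(a')-g(a')| for every a. -/
/-!
Writing `Z_f = ∑ exp f`, one has `log (π̃ a / π a) = (g a - f a) + (log Z_f - log Z_g)`.
The log-partition difference is controlled by Jensen's inequality for `exp` with the
weights `π`:
`Z_g / Z_f = ∑ π · exp (g - f) ≥ exp (∑ π · (g - f))`, so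
`log Z_f - log Z_g ≤ ∑ π · (f - g)`, and symmetrically with `π̃`.
-/

open Finset Real

noncomputable def softmax {ι : Type*} [Fintype ι] (f : ι → ℝ) (i : ι) : ℝ :=
  exp (f i) / ∑ j, exp (f j)

namespace softmax

variable {ι : Type*} [Fintype ι] [Nonempty ι]

lemma sum_exp_pos (f : ι → ℝ) : 0 < ∑ i, exp (f i) :=
  sum_pos (fun _ _ => exp_pos _) univ_nonempty

lemma nonneg (f : ι → ℝ) (i : ι) : 0 ≤ softmax f i :=
  div_nonneg (exp_pos _).le (sum_exp_pos f).le

lemma sum_eq_one (f : ι → ℝ) : ∑ i, softmax f i = 1 := by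
  simp only [softmax, ← sum_div, div_self (sum_exp_pos f).ne']

lemma sum_mul_exp_sub (f g : ι → ℝ) :
    ∑ i, softmax f i * exp (g i - f i) = (∑ i, exp (g i)) / ∑ i, exp (f i) := by
  simp only [softmax, exp_sub, sum_div]
  exact sum_congr rfl fun i _ => by field_simp

lemma log_sum_exp_sub_le (f g : ι → ℝ) :
    log (∑ i, exp (f i)) - log (∑ i, exp (g i)) ≤ ∑ i, softmax f i * (f i - g i) := by
  have jensen : exp (∑ i, softmax f i * (g i - f i)) ≤ ∑ i, softmax f i * exp (g i - f i) :=
    convexOn_exp.map_sum_le (fun i _ => nonneg f i) (sum_eq_one f) (fun _ _ => Set.mem_univ _)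
  rw [sum_mul_exp_sub, ← le_log_iff_exp_le (by positivity [sum_exp_pos f, sum_exp_pos g]),
    log_div (sum_exp_pos g).ne' (sum_exp_pos f).ne'] at jensen
  have hneg : ∑ i, softmax f i * (f i - g i) = -∑ i, softmax f i * (g i - f i) := by
    rw [← sum_neg_distrib]
    exact sum_congr rfl fun i _ => by ring
  linarith

lemma abs_log_sum_exp_sub_le (f g : ι → ℝ) :
    |log (∑ i, exp (f i)) - log (∑ i, exp (g i))| ≤
      ∑ i, (softmax f i + softmax g i) * |f i - g i| := by
  rw [abs_sub_le_iff]
  constructor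
  · refine (log_sum_exp_sub_le f g).trans (sum_le_sum fun i _ => ?_)
    nlinarith [nonneg f i, nonneg g i, le_abs_self (f i - g i), abs_nonneg (f i - g i)]
  · refine (log_sum_exp_sub_le g f).trans (sum_le_sum fun i _ => ?_)
    nlinarith [nonneg f i, nonneg g i, neg_abs_le (f i - g i), abs_nonneg (f i - g i)]

lemma log_div (f g : ι → ℝ) (a : ι) :
    log (softmax g a / softmax f a) =
      g a - f a + (log (∑ i, exp (f i)) - log (∑ i, exp (g i))) := by
  rw [softmax, softmax,
    Real.log_div (by positivity [sum_exp_pos g]) (by positivity [sum_exp_pos f]),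
    Real.log_div (exp_ne_zero _) (sum_exp_pos g).ne',
    Real.log_div (exp_ne_zero _) (sum_exp_pos f).ne', log_exp, log_exp]
  ring

end softmax

theorem stmt_8 {𝒜 : Type*} [Fintype 𝒜] [Nonempty 𝒜] (f g : 𝒜 → ℝ) :
    ∀ a : 𝒜,
      |Real.log ((Real.exp (g a) / ∑ a' : 𝒜, Real.exp (g a')) /
          (Real.exp (f a) / ∑ a' : 𝒜, Real.exp (f a')))| ≤
        |f a - g a| +
          ∑ a' : 𝒜,
            ((Real.exp (f a') / ∑ a'' : 𝒜, Real.exp (f a'')) +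
              (Real.exp (g a') / ∑ a'' : 𝒜, Real.exp (g a''))) * |f a' - g a'| := by
  intro a
  change |log (softmax g a / softmax f a)| ≤
    |f a - g a| + ∑ i, (softmax f i + softmax g i) * |f i - g i|
  rw [softmax.log_div, abs_sub_comm (f a)]
  exact (abs_add_le _ _).trans (add_le_add_right (softmax.abs_log_sum_exp_sub_le f g) _)
end

section
/- For θ_i, θ_i(0) ∈ ℝ^d with max_i ‖θ_i - θ_i(0)‖₂ ≤ R₀/√m and any x with ‖x‖₂ ≤ 1, the sum (1/√m) Σ_{i=1}^m |(1{θ_iᵀx ≥ 0} - 1{θ_i(0)ᵀx ≥ 0}) θ_i(0)ᵀx| is at most (R₀/m) Σ_{i=1}^m 1{|θ_i(0)ᵀx| ≤ R₀/√m}. -/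
open scoped RealInnerProductSpace

theorem abs_step_sub_step_mul_le {a b r : ℝ} (h : |a - b| ≤ r) :
    |((if 0 ≤ a then (1 : ℝ) else 0) - (if 0 ≤ b then (1 : ℝ) else 0)) * b| ≤
      r * (if |b| ≤ r then (1 : ℝ) else 0) := by
  have hr : 0 ≤ r := (abs_nonneg _).trans h
  rw [abs_le] at h
  -- the steps differ only when `a` and `b` have opposite signs, and then `|b| ≤ |a - b|`
  by_cases ha : 0 ≤ a <;> by_cases hb : 0 ≤ b
  · simp only [ha, hb, if_true, sub_self, zero_mul, abs_zero]
    positivity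
  · have hbr : |b| ≤ r := abs_le.mpr ⟨by linarith, by linarith⟩
    simp [ha, hb, hbr]
  · have hbr : |b| ≤ r := abs_le.mpr ⟨by linarith, by linarith⟩
    simp [ha, hb, hbr]
  · simp only [ha, hb, if_false, sub_self, zero_mul, abs_zero]
    positivity

theorem abs_inner_sub_le_of_norm_le {E : Type*} [NormedAddCommGroup E] [InnerProductSpace ℝ E]
    {u v x : E} {r : ℝ} (huv : ‖u - v‖ ≤ r) (hx : ‖x‖ ≤ 1) :
    |⟪u, x⟫ - ⟪v, x⟫| ≤ r :=
  calc |⟪u, x⟫ - ⟪v, x⟫| = |⟪u - v, x⟫| := by rw [inner_sub_left]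
    _ ≤ ‖u - v‖ * ‖x‖ := abs_real_inner_le_norm _ _
    _ ≤ ‖u - v‖ := mul_le_of_le_one_right (norm_nonneg _) hx
    _ ≤ r := huv

theorem stmt_11_general {d : ℕ} (m : ℕ) (R₀ : ℝ)
    (θ θ₀ : Fin m → EuclideanSpace ℝ (Fin d))
    (hclose : ∀ i, ‖θ i - θ₀ i‖ ≤ R₀ / Real.sqrt m)
    (x : EuclideanSpace ℝ (Fin d)) (hx : ‖x‖ ≤ 1) :
    (1 / Real.sqrt m) *
        ∑ i : Fin m,
          |((if 0 ≤ ⟪θ i, x⟫ then (1 : ℝ) else 0) -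
              (if 0 ≤ ⟪θ₀ i, x⟫ then (1 : ℝ) else 0)) * ⟪θ₀ i, x⟫| ≤
      (R₀ / m) * ∑ i : Fin m, (if |⟪θ₀ i, x⟫| ≤ R₀ / Real.sqrt m then (1 : ℝ) else 0) := by
  calc (1 / Real.sqrt m) * ∑ i : Fin m,
        |((if 0 ≤ ⟪θ i, x⟫ then (1 : ℝ) else 0) -
          (if 0 ≤ ⟪θ₀ i, x⟫ then (1 : ℝ) else 0)) * ⟪θ₀ i, x⟫|
      ≤ (1 / Real.sqrt m) * ∑ i : Fin m,
          R₀ / Real.sqrt m * (if |⟪θ₀ i, x⟫| ≤ R₀ / Real.sqrt m then (1 : ℝ) else 0) := by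
        gcongr with i
        exact abs_step_sub_step_mul_le (abs_inner_sub_le_of_norm_le (hclose i) hx)
    _ = (R₀ / m) * ∑ i : Fin m, (if |⟪θ₀ i, x⟫| ≤ R₀ / Real.sqrt m then (1 : ℝ) else 0) := by
        rw [← Finset.mul_sum, ← mul_assoc, div_mul_div_comm, one_mul,
          Real.mul_self_sqrt (Nat.cast_nonneg m)]

theorem stmt_11 {d : ℕ} (m : ℕ) (hm : 0 < m) (R₀ : ℝ) (hR₀ : 0 < R₀)
    (θ θ₀ : Fin m → EuclideanSpace ℝ (Fin d))
    (hclose : ∀ i, ‖θ i - θ₀ i‖ ≤ R₀ / Real.sqrt m)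
    (x : EuclideanSpace ℝ (Fin d)) (hx : ‖x‖ ≤ 1) :
    (1 / Real.sqrt m) *
        ∑ i : Fin m,
          |((if 0 ≤ ⟪θ i, x⟫ then (1 : ℝ) else 0) -
              (if 0 ≤ ⟪θ₀ i, x⟫ then (1 : ℝ) else 0)) * ⟪θ₀ i, x⟫| ≤
      (R₀ / m) * ∑ i : Fin m, (if |⟪θ₀ i, x⟫| ≤ R₀ / Real.sqrt m then (1 : ℝ) else 0) :=
  stmt_11_general m R₀ θ θ₀ hclose x hx
end
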